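/- Let H be a connected k-uniform hypergraph with n vertices and degrees d_1,...,d_n, and let Q_H = D_H + A_H be its signless Laplacian tensor. Then min over circuits gamma in G_{Q_H} of (prod_{i in gamma} 2 d_i)^{1/|gamma|} <= rho(Q_H) <= max over circuits gamma in G_{Q_H} of (prod_{i in gamma} 2 d_i)^{1/|gamma|}. -/

import Mathlib

open scoped BigOperators
open Finset

/-- The arc relation of the digraph `G_A` of an order-`m` dimension-`n` tensor `A`,
    whose entries are indexed by a head index and a tail of `m - 1` indices:
    `(i, j)` is an arc when some entry `a_{i i_2 ... i_m} ≠ 0` has `j` among `i_2, ..., i_m`. -/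
def tArc (m n : ℕ) (A : Fin n → (Fin (m - 1) → Fin n) → ℝ) (i j : Fin n) : Prop :=
  ∃ t : Fin (m - 1) → Fin n, A i t ≠ 0 ∧ j ∈ Set.range t

/-- A digraph (given by its arc relation) is strongly connected. -/
def StronglyConnected {n : ℕ} (arc : Fin n → Fin n → Prop) : Prop :=
  ∀ i j : Fin n, Relation.ReflTransGen arc i j

/-- `γ 0, γ 1, ..., γ p = γ 0` is a circuit (closed directed walk, loops allowed)
    of length `p` in the digraph with arc relation `arc`. -/
def IsCircuit {n : ℕ} (arc : Fin n → Fin n → Prop) (p : ℕ) (γ : ℕ → Fin n) : Prop :=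
  0 < p ∧ γ p = γ 0 ∧ ∀ j < p, arc (γ j) (γ (j + 1))

/-- `lam` is an eigenvalue of the order-`m` dimension-`n` real tensor `A`:
    there is a nonzero complex vector `x` with `A x^{m-1} = lam x^{[m-1]}`. -/
def IsEig (m n : ℕ) (A : Fin n → (Fin (m - 1) → Fin n) → ℝ) (lam : ℂ) : Prop :=
  ∃ x : Fin n → ℂ, x ≠ 0 ∧ ∀ i : Fin n,
    ∑ t : Fin (m - 1) → Fin n, (A i t : ℂ) * ∏ j, x (t j) = lam * x i ^ (m - 1)

/-- The spectral radius of a tensor: the supremum of moduli of its eigenvalues. -/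
noncomputable def specRad (m n : ℕ) (A : Fin n → (Fin (m - 1) → Fin n) → ℝ) : ℝ :=
  sSup {r : ℝ | ∃ lam : ℂ, IsEig m n A lam ∧ ‖lam‖ = r}

/-- The `i`-th slice sum `K_i = ∑_{i_2,...,i_m} a_{i i_2 ... i_m}`. -/
def sliceSum (m n : ℕ) (A : Fin n → (Fin (m - 1) → Fin n) → ℝ) (i : Fin n) : ℝ :=
  ∑ t : Fin (m - 1) → Fin n, A i t

/-- `(A x^{m-1})_i = ∑_{i_2,...,i_m} a_{i i_2 ... i_m} x_{i_2} ⋯ x_{i_m}`. -/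
def Ax (m n : ℕ) (A : Fin n → (Fin (m - 1) → Fin n) → ℝ) (x : Fin n → ℝ) (i : Fin n) : ℝ :=
  ∑ t : Fin (m - 1) → Fin n, A i t * ∏ j, x (t j)

/-- The degree of vertex `i` in the hypergraph with edge set `E`. -/
def deg (n : ℕ) (E : Finset (Finset (Fin n))) (i : Fin n) : ℕ :=
  (E.filter (fun e => i ∈ e)).card

/-- The adjacency tensor of a `k`-uniform hypergraph with edge set `E`:
    entry `1/(k-1)!` when the indices form an edge, `0` otherwise. -/
noncomputable def adjT (k n : ℕ) (E : Finset (Finset (Fin n))) :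
    Fin n → (Fin (k - 1) → Fin n) → ℝ :=
  fun i t =>
    if insert i (Finset.image t Finset.univ) ∈ E then 1 / (Nat.factorial (k - 1) : ℝ) else 0

/-- The signless Laplacian tensor `Q = D + A` of a `k`-uniform hypergraph. -/
noncomputable def qT (k n : ℕ) (E : Finset (Finset (Fin n))) :
    Fin n → (Fin (k - 1) → Fin n) → ℝ :=
  fun i t => (if ∀ j, t j = i then (deg n E i : ℝ) else 0) + adjT k n E i t

/-- The hypergraph with edge set `E` is connected. -/
def HConnected (n : ℕ) (E : Finset (Finset (Fin n))) : Prop :=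
  ∀ i j : Fin n, Relation.ReflTransGen (fun u v => ∃ e ∈ E, u ∈ e ∧ v ∈ e) i j

/-! The slice sums of `Q_H` are `2 d_i`, and connectivity makes every `d_i` positive as soon as
there is an edge, so every vertex carries a loop of `G_{Q_H}`: the one-vertex circuits give
`min ≤ 2 d_min` and `2 d_max ≤ max`. It remains to see `2 d_min ≤ ρ(Q_H) ≤ 2 d_max`.
Evaluating `A x^{m-1} = λ x^{[m-1]}` at a coordinate of maximal modulus bounds every `|λ|` by a
slice sum. Conversely, for a positive tensor a pair maximising `λ` subject to
`λ x^{[m-1]} ≤ A x^{m-1}` on the simplex is a (Perron) eigenpair with `λ ≥ min_i K_i`, and a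
compactness argument passes from `A + ε` to the nonnegative tensor `A`. -/

open Filter Topology

def IsSubEig (m n : ℕ) (A : Fin n → (Fin (m - 1) → Fin n) → ℝ) (lam : ℝ) (x : Fin n → ℝ) :
    Prop :=
  ∀ i, lam * x i ^ (m - 1) ≤ Ax m n A x i

section Tensor

variable {m n : ℕ} {A : Fin n → (Fin (m - 1) → Fin n) → ℝ}

lemma sliceSum_nonneg (hA : ∀ i t, 0 ≤ A i t) (i : Fin n) : 0 ≤ sliceSum m n A i :=
  sum_nonneg fun t _ => hA i t

lemma Ax_nonneg (hA : ∀ i t, 0 ≤ A i t) {x : Fin n → ℝ} (hx : ∀ j, 0 ≤ x j) (i : Fin n) :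
    0 ≤ Ax m n A x i :=
  sum_nonneg fun t _ => mul_nonneg (hA i t) (prod_nonneg fun j _ => hx (t j))

lemma Ax_smul (c : ℝ) (x : Fin n → ℝ) (i : Fin n) :
    Ax m n A (c • x) i = c ^ (m - 1) * Ax m n A x i := by
  simp only [Ax, mul_sum, Pi.smul_apply, smul_eq_mul, prod_mul_distrib, prod_const, card_univ,
    Fintype.card_fin]
  exact sum_congr rfl fun t _ => by ring

lemma Ax_const (c : ℝ) (i : Fin n) : Ax m n A (fun _ => c) i = c ^ (m - 1) * sliceSum m n A i := by
  simp only [Ax, sliceSum, mul_sum, prod_const, card_univ, Fintype.card_fin, mul_comm]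

lemma Ax_mono (hA : ∀ i t, 0 ≤ A i t) {x y : Fin n → ℝ} (hx : ∀ j, 0 ≤ x j)
    (hxy : ∀ j, x j ≤ y j) (i : Fin n) : Ax m n A x i ≤ Ax m n A y i :=
  sum_le_sum fun t _ => mul_le_mul_of_nonneg_left
    (prod_le_prod (fun j _ => hx (t j)) fun j _ => hxy (t j)) (hA i t)

lemma Ax_lt_Ax (hm : 2 ≤ m) (hA : ∀ i t, 0 < A i t) {x y : Fin n → ℝ} (hx : ∀ j, 0 ≤ x j)
    (hxy : ∀ j, x j ≤ y j) {j : Fin n} (hj : x j < y j) (i : Fin n) :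
    Ax m n A x i < Ax m n A y i := by
  refine sum_lt_sum (fun t _ => mul_le_mul_of_nonneg_left
    (prod_le_prod (fun l _ => hx (t l)) fun l _ => hxy (t l)) (hA i t).le)
    ⟨fun _ => j, mem_univ _, ?_⟩
  simp only [prod_const, card_univ, Fintype.card_fin]
  exact mul_lt_mul_of_pos_left (pow_lt_pow_left₀ hj (hx j) (by omega)) (hA i _)

lemma IsSubEig.smul {lam : ℝ} {x : Fin n → ℝ} (h : IsSubEig m n A lam x) {c : ℝ} (hc : 0 ≤ c) :
    IsSubEig m n A lam (c • x) := fun i => by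
  rw [Ax_smul, Pi.smul_apply, smul_eq_mul, mul_pow, mul_left_comm]
  exact mul_le_mul_of_nonneg_left (h i) (pow_nonneg hc _)

lemma IsSubEig.exists_le_sliceSum (hA : ∀ i t, 0 ≤ A i t) {lam : ℝ} {x : Fin n → ℝ}
    (h : IsSubEig m n A lam x) (hx : ∀ j, 0 ≤ x j) (hx0 : x ≠ 0) :
    ∃ i, lam ≤ sliceSum m n A i := by
  obtain ⟨j, hj⟩ := Function.ne_iff.mp hx0
  have : Nonempty (Fin n) := ⟨j⟩
  obtain ⟨i, hi⟩ := Finite.exists_max x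
  have hpos : 0 < x i ^ (m - 1) := pow_pos (((hx j).lt_of_ne (Ne.symm hj)).trans_le (hi j)) _
  refine ⟨i, le_of_mul_le_mul_right ?_ hpos⟩
  calc lam * x i ^ (m - 1) ≤ Ax m n A x i := h i
    _ ≤ Ax m n A (fun _ => x i) i := Ax_mono hA hx hi i
    _ = sliceSum m n A i * x i ^ (m - 1) := by rw [Ax_const, mul_comm]

lemma IsEig.exists_norm_le_sliceSum (hA : ∀ i t, 0 ≤ A i t) {lam : ℂ} (h : IsEig m n A lam) :
    ∃ i, ‖lam‖ ≤ sliceSum m n A i := by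
  obtain ⟨x, hx0, hx⟩ := h
  refine IsSubEig.exists_le_sliceSum hA (fun i => ?_) (fun j => norm_nonneg (x j))
    fun h0 => hx0 (funext fun j => norm_eq_zero.mp (congrFun h0 j))
  calc ‖lam‖ * ‖x i‖ ^ (m - 1) = ‖∑ t, (A i t : ℂ) * ∏ j, x (t j)‖ := by
        rw [hx i, norm_mul, norm_pow]
    _ ≤ ∑ t, ‖(A i t : ℂ) * ∏ j, x (t j)‖ := norm_sum_le _ _
    _ = Ax m n A (fun j => ‖x j‖) i := by
        simp only [Ax, norm_mul, norm_prod, Complex.norm_real, Real.norm_of_nonneg (hA i _)]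

lemma isEig_ofReal {lam : ℝ} {x : Fin n → ℝ} (hx0 : x ≠ 0)
    (h : ∀ i, Ax m n A x i = lam * x i ^ (m - 1)) : IsEig m n A lam := by
  refine ⟨fun i => x i, fun h0 => hx0 (funext fun i => Complex.ofReal_eq_zero.mp (congrFun h0 i)),
    fun i => ?_⟩
  have := congrArg (fun r : ℝ => (r : ℂ)) (h i)
  push_cast [Ax] at this
  exact this

lemma specRad_nonneg : 0 ≤ specRad m n A :=
  Real.sSup_nonneg (by rintro _ ⟨lam, -, rfl⟩; exact norm_nonneg _)

lemma specRad_le (hA : ∀ i t, 0 ≤ A i t) {c : ℝ} (hc0 : 0 ≤ c) (hc : ∀ i, sliceSum m n A i ≤ c) :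
    specRad m n A ≤ c := by
  refine Real.sSup_le ?_ hc0
  rintro _ ⟨lam, h, rfl⟩
  obtain ⟨i, hi⟩ := h.exists_norm_le_sliceSum hA
  exact hi.trans (hc i)

lemma IsEig.norm_le_specRad (hA : ∀ i t, 0 ≤ A i t) {lam : ℂ} (h : IsEig m n A lam) :
    ‖lam‖ ≤ specRad m n A := by
  refine le_csSup ⟨∑ i, sliceSum m n A i, ?_⟩ ⟨lam, h, rfl⟩
  rintro _ ⟨mu, hmu, rfl⟩
  obtain ⟨i, hi⟩ := hmu.exists_norm_le_sliceSum hA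
  exact hi.trans (single_le_sum (fun j _ => sliceSum_nonneg hA j) (mem_univ i))

end Tensor

section Simplex

variable {ι : Type*} [Fintype ι]

lemma ne_zero_of_mem_stdSimplex {x : ι → ℝ} (hx : x ∈ stdSimplex ℝ ι) : x ≠ 0 := by
  rintro rfl
  simpa using hx.2

lemma inv_sum_smul_mem_stdSimplex {y : ι → ℝ} (hy : ∀ j, 0 ≤ y j) (hy0 : y ≠ 0) :
    (∑ j, y j)⁻¹ • y ∈ stdSimplex ℝ ι := by
  obtain ⟨j, hj⟩ := Function.ne_iff.mp hy0
  have hs : 0 < ∑ j, y j := sum_pos' (fun j _ => hy j) ⟨j, mem_univ j, (hy j).lt_of_ne (Ne.symm hj)⟩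
  refine ⟨fun j => mul_nonneg (inv_nonneg.mpr hs.le) (hy j), ?_⟩
  simp only [Pi.smul_apply, smul_eq_mul, ← mul_sum, inv_mul_cancel₀ hs.ne']

end Simplex

lemma card_filter_image_eq_factorial {α : Type*} [DecidableEq α] [Fintype α] {q : ℕ}
    {s : Finset α} (hs : #s = q) : #{t : Fin q → α | image t univ = s} = q.factorial := by
  have hcard : Fintype.card (Fin q) = Fintype.card s := by simp [hs]
  let e : {t : Fin q → α // image t univ = s} ≃ (Fin q ≃ s) :=
    { toFun := fun t => Equiv.ofBijective
        (fun j => ⟨t.1 j,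
          t.2.subst (motive := fun u => t.1 j ∈ u) (mem_image_of_mem _ (mem_univ j))⟩)
        ((Fintype.bijective_iff_surjective_and_card _).mpr ⟨fun v => by
          obtain ⟨j, -, hj⟩ := mem_image.mp (t.2.symm.subst (motive := fun u => (v : α) ∈ u) v.2)
          exact ⟨j, Subtype.ext hj⟩, hcard⟩)
      invFun := fun e => ⟨fun j => e j, by
        ext v
        simp only [mem_image, mem_univ, true_and]
        exact ⟨by rintro ⟨j, rfl⟩; exact (e j).2, fun hv => ⟨e.symm ⟨v, hv⟩, by simp⟩⟩⟩
      left_inv := fun t => rfl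
      right_inv := fun e => by ext; rfl }
  rw [← Fintype.card_subtype, Fintype.card_congr e,
    Fintype.card_equiv (Fintype.equivOfCardEq hcard), Fintype.card_fin]

lemma insert_image_eq_iff {α : Type*} [DecidableEq α] {q : ℕ} {e : Finset α} {i : α}
    (he : #e = q + 1) (hi : i ∈ e) (t : Fin q → α) :
    insert i (image t univ) = e ↔ image t univ = e.erase i := by
  refine ⟨?_, fun h => by rw [h, insert_erase hi]⟩
  rintro rfl
  have hnot : i ∉ image t univ := fun hmem => by
    rw [insert_eq_of_mem hmem] at he
    have : #(image t univ) ≤ q := card_image_le.trans (by simp)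
    omega
  exact (erase_insert hnot).symm

section PerronFrobenius

variable {m n : ℕ} {A : Fin n → (Fin (m - 1) → Fin n) → ℝ}

/-- The Collatz–Wielandt step: with `y = (A x^{m-1})^{[1/(m-1)]}` one has
`λ^{1/(m-1)} x ≤ y`, strictly at `i₀`, so strict monotonicity of a positive tensor gives
`λ y^{[m-1]} = A (λ^{1/(m-1)} x)^{m-1} < A y^{m-1}`. -/
lemma IsSubEig.exists_strict (hm : 2 ≤ m) (hA : ∀ i t, 0 < A i t) {lam : ℝ} (hlam : 0 ≤ lam)
    {x : Fin n → ℝ} (h : IsSubEig m n A lam x) (hx : ∀ j, 0 ≤ x j) {i₀ : Fin n}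
    (hi₀ : lam * x i₀ ^ (m - 1) < Ax m n A x i₀) :
    ∃ y : Fin n → ℝ, (∀ j, 0 ≤ y j) ∧ y ≠ 0 ∧ ∀ i, lam * y i ^ (m - 1) < Ax m n A y i := by
  have hq : m - 1 ≠ 0 := by omega
  have hAx : ∀ i, 0 ≤ Ax m n A x i := Ax_nonneg (fun i t => (hA i t).le) hx
  set y : Fin n → ℝ := fun i => Ax m n A x i ^ ((m - 1 : ℕ) : ℝ)⁻¹
  set z : Fin n → ℝ := lam ^ ((m - 1 : ℕ) : ℝ)⁻¹ • x
  have hy : ∀ i, y i ^ (m - 1) = Ax m n A x i := fun i => Real.rpow_inv_natCast_pow (hAx i) hq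
  have hz : ∀ i, z i ^ (m - 1) = lam * x i ^ (m - 1) := fun i => by
    simp only [z, Pi.smul_apply, smul_eq_mul, mul_pow, Real.rpow_inv_natCast_pow hlam hq]
  have hy0 : ∀ i, 0 ≤ y i := fun i => Real.rpow_nonneg (hAx i) _
  have hz0 : ∀ i, 0 ≤ z i := fun i => mul_nonneg (Real.rpow_nonneg hlam _) (hx i)
  have hzy : ∀ i, z i ≤ y i := fun i =>
    (pow_le_pow_iff_left₀ (hz0 i) (hy0 i) hq).mp (by rw [hz, hy]; exact h i)
  have hzy₀ : z i₀ < y i₀ :=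
    (pow_lt_pow_iff_left₀ (hz0 i₀) (hy0 i₀) hq).mp (by rw [hz, hy]; exact hi₀)
  refine ⟨y, hy0, fun h0 => ((hz0 i₀).trans_lt hzy₀).ne' (congrFun h0 i₀), fun i => ?_⟩
  calc lam * y i ^ (m - 1) = Ax m n A z i := by
        rw [hy, Ax_smul, Real.rpow_inv_natCast_pow hlam hq]
    _ < Ax m n A y i := Ax_lt_Ax hm hA hz0 hzy hzy₀ i

lemma exists_gt_isSubEig {lam : ℝ} {y : Fin n → ℝ} (h : ∀ i, lam * y i ^ (m - 1) < Ax m n A y i) :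
    ∃ lam' > lam, IsSubEig m n A lam' y := by
  have hev : ∀ᶠ l in 𝓝 lam, ∀ i, l * y i ^ (m - 1) < Ax m n A y i :=
    eventually_all.mpr fun i => ContinuousAt.eventually_lt (by fun_prop) continuousAt_const (h i)
  obtain ⟨l, hl, hly⟩ := hev.exists_gt
  exact ⟨l, hl, fun i => (hly i).le⟩

lemma isClosed_setOf_isSubEig : IsClosed {p : ℝ × (Fin n → ℝ) | IsSubEig m n A p.1 p.2} := by
  simp only [IsSubEig, Set.ofPred_forall]
  exact isClosed_iInter fun i => isClosed_le (by fun_prop) (by unfold Ax; fun_prop)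

lemma exists_eigenpair_of_pos (hm : 2 ≤ m) [Nonempty (Fin n)] (hA : ∀ i t, 0 < A i t) {c : ℝ}
    (hc0 : 0 ≤ c) (hc : ∀ i, c ≤ sliceSum m n A i) :
    ∃ lam, c ≤ lam ∧ ∃ x ∈ stdSimplex ℝ (Fin n), ∀ i, Ax m n A x i = lam * x i ^ (m - 1) := by
  have hA' : ∀ i t, 0 ≤ A i t := fun i t => (hA i t).le
  set C := ∑ i, sliceSum m n A i
  have hbound : ∀ lam x, x ∈ stdSimplex ℝ (Fin n) → IsSubEig m n A lam x → lam ≤ C := by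
    intro lam x hx h
    obtain ⟨i, hi⟩ := h.exists_le_sliceSum hA' hx.1 (ne_zero_of_mem_stdSimplex hx)
    exact hi.trans (single_le_sum (fun j _ => sliceSum_nonneg hA' j) (mem_univ i))
  set K := (Set.Icc c C ×ˢ stdSimplex ℝ (Fin n)) ∩ {p | IsSubEig m n A p.1 p.2}
  have hK : IsCompact K :=
    (isCompact_Icc.prod (isCompact_stdSimplex ℝ _)).inter_right isClosed_setOf_isSubEig
  set u : Fin n → ℝ := fun _ => (Fintype.card (Fin n) : ℝ)⁻¹
  have hu : u ∈ stdSimplex ℝ (Fin n) := stdSimplex.barycenter.2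
  have hcu : IsSubEig m n A c u := fun i => by
    simp only [u, Ax_const, mul_comm c]
    exact mul_le_mul_of_nonneg_left (hc i) (by positivity)
  obtain ⟨⟨lam, x⟩, ⟨⟨⟨hclam, -⟩, hx⟩, hsub⟩, hmax⟩ :=
    hK.exists_isMaxOn ⟨(c, u), ⟨⟨le_rfl, hbound c u hu hcu⟩, hu⟩, hcu⟩
    continuous_fst.continuousOn
  refine ⟨lam, hclam, x, hx, fun i => by_contra fun hne => ?_⟩
  obtain ⟨y, hy0, hyne, hy⟩ :=
    hsub.exists_strict hm hA (hc0.trans hclam) hx.1 ((hsub i).lt_of_ne (Ne.symm hne))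
  obtain ⟨l, hl, hly⟩ := exists_gt_isSubEig hy
  have hz := inv_sum_smul_mem_stdSimplex hy0 hyne
  have hlz := hly.smul (inv_nonneg.mpr (sum_nonneg fun j (_ : j ∈ univ) => hy0 j))
  exact (hmax (a := (l, _)) ⟨⟨⟨hclam.trans hl.le, hbound _ _ hz hlz⟩, hz⟩, hlz⟩).not_gt hl

/-- The eigenpairs of `A + ε` for `ε ∈ (0, 1]` form a compact family; its projection to `ε` is
closed, hence also contains `ε = 0`. -/
lemma exists_eigenpair_of_nonneg (hm : 2 ≤ m) [Nonempty (Fin n)] (hA : ∀ i t, 0 ≤ A i t) {c : ℝ}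
    (hc0 : 0 ≤ c) (hc : ∀ i, c ≤ sliceSum m n A i) :
    ∃ lam, c ≤ lam ∧ ∃ x ∈ stdSimplex ℝ (Fin n), ∀ i, Ax m n A x i = lam * x i ^ (m - 1) := by
  set C := ∑ i, sliceSum m n (fun i t => A i t + 1) i
  set T : Set (ℝ × ℝ × (Fin n → ℝ)) :=
    (Set.Icc 0 1 ×ˢ Set.Icc c C ×ˢ stdSimplex ℝ (Fin n)) ∩
      {q | ∀ i, Ax m n (fun i t => A i t + q.1) q.2.2 i = q.2.1 * q.2.2 i ^ (m - 1)}
  have hT : IsCompact T := by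
    refine (isCompact_Icc.prod (isCompact_Icc.prod (isCompact_stdSimplex ℝ _))).inter_right ?_
    simp only [Set.ofPred_forall]
    exact isClosed_iInter fun i => isClosed_eq (by unfold Ax; fun_prop) (by fun_prop)
  have hsub : Set.Ioc 0 1 ⊆ Prod.fst '' T := by
    rintro ε ⟨hε0, hε1⟩
    have hAε : ∀ i t, 0 < A i t + ε := fun i t => add_pos_of_nonneg_of_pos (hA i t) hε0
    obtain ⟨lam, hlam, x, hx, heig⟩ := exists_eigenpair_of_pos hm hAε hc0 fun i =>
      (hc i).trans (sum_le_sum fun t _ => by linarith)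
    obtain ⟨i, hi⟩ := IsSubEig.exists_le_sliceSum (fun i t => (hAε i t).le)
      (fun i => (heig i).ge) hx.1 (ne_zero_of_mem_stdSimplex hx)
    have hlamC : lam ≤ C := hi.trans <| (sum_le_sum fun t _ => by linarith).trans <|
      single_le_sum (fun j _ => sliceSum_nonneg (fun i t => by linarith [hA i t]) j) (mem_univ i)
    exact ⟨(ε, lam, x), ⟨⟨⟨hε0.le, hε1⟩, ⟨hlam, hlamC⟩, hx⟩, heig⟩, rfl⟩
  have h0 : (0 : ℝ) ∈ Prod.fst '' T := (hT.image continuous_fst).isClosed.closure_subset_iff.mpr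
    hsub (by rw [closure_Ioc zero_ne_one]; exact ⟨le_rfl, zero_le_one⟩)
  obtain ⟨⟨_, lam, x⟩, ⟨⟨-, ⟨hlam, -⟩, hx⟩, heig⟩, rfl⟩ := h0
  exact ⟨lam, hlam, x, hx, by simpa using heig⟩

lemma le_specRad (hm : 2 ≤ m) [Nonempty (Fin n)] (hA : ∀ i t, 0 ≤ A i t) {c : ℝ} (hc0 : 0 ≤ c)
    (hc : ∀ i, c ≤ sliceSum m n A i) : c ≤ specRad m n A := by
  obtain ⟨lam, hlam, x, hx, heig⟩ := exists_eigenpair_of_nonneg hm hA hc0 hc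
  calc c ≤ ‖(lam : ℂ)‖ := by rw [Complex.norm_of_nonneg (hc0.trans hlam)]; exact hlam
    _ ≤ specRad m n A := (isEig_ofReal (ne_zero_of_mem_stdSimplex hx) heig).norm_le_specRad hA

end PerronFrobenius

section Hypergraph

variable {k n : ℕ} {E : Finset (Finset (Fin n))}

/-- Each edge `e ∋ i` is hit by exactly `(k-1)!` tails, which cancels the weight `1/(k-1)!`. -/
lemma sliceSum_adjT (hk : 1 ≤ k) (hunif : ∀ e ∈ E, #e = k) (i : Fin n) :
    sliceSum k n (adjT k n E) i = deg n E i := by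
  have hcount : #{t : Fin (k - 1) → Fin n | insert i (image t univ) ∈ E} =
      deg n E i * (k - 1).factorial := by
    rw [card_eq_sum_card_fiberwise (f := fun t => insert i (image t univ))
      (t := {e ∈ E | i ∈ e}) fun t ht => by
        simp only [coe_filter, mem_univ, true_and, Set.mem_ofPred_eq] at ht ⊢
        exact ⟨ht, mem_insert_self _ _⟩, deg, card_eq_sum_ones, sum_mul, one_mul]
    refine sum_congr rfl fun e he => ?_
    rw [mem_filter] at he
    have he' : #e = k - 1 + 1 := by rw [hunif e he.1]; omega
    have hfiber : ∀ t : Fin (k - 1) → Fin n,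
        insert i (image t univ) ∈ E ∧ insert i (image t univ) = e ↔ image t univ = e.erase i :=
      fun t => by
        rw [← insert_image_eq_iff he' he.2 t]
        exact ⟨And.right, fun h => ⟨h ▸ he.1, h⟩⟩
    rw [filter_filter, filter_congr fun t _ => hfiber t]
    exact card_filter_image_eq_factorial (by rw [card_erase_of_mem he.2, he']; rfl)
  simp only [sliceSum, adjT]
  rw [sum_ite, sum_const_zero, add_zero, sum_const, hcount, nsmul_eq_mul]
  push_cast
  field_simp

lemma sliceSum_qT (hk : 1 ≤ k) (hunif : ∀ e ∈ E, #e = k) (i : Fin n) :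
    sliceSum k n (qT k n E) i = 2 * deg n E i := by
  have hdiag : ∀ t : Fin (k - 1) → Fin n, (∀ j, t j = i) ↔ t = fun _ => i :=
    fun t => funext_iff.symm
  calc sliceSum k n (qT k n E) i =
        (∑ t : Fin (k - 1) → Fin n, if t = fun _ => i then (deg n E i : ℝ) else 0) +
          sliceSum k n (adjT k n E) i := by
        simp only [sliceSum, qT, sum_add_distrib, hdiag]
    _ = 2 * deg n E i := by rw [sum_ite_eq', if_pos (mem_univ _), sliceSum_adjT hk hunif]; ring

lemma adjT_nonneg (i : Fin n) (t : Fin (k - 1) → Fin n) : 0 ≤ adjT k n E i t := by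
  unfold adjT; split_ifs <;> positivity

lemma qT_nonneg (i : Fin n) (t : Fin (k - 1) → Fin n) : 0 ≤ qT k n E i t :=
  add_nonneg (by split_ifs <;> positivity) (adjT_nonneg i t)

lemma tArc_qT_self (hk : 2 ≤ k) {i : Fin n} (hi : 0 < deg n E i) : tArc k n (qT k n E) i i := by
  have hdiag : (deg n E i : ℝ) ≤ qT k n E i fun _ => i :=
    le_add_of_le_of_nonneg (if_pos fun _ => rfl).ge (adjT_nonneg i _)
  exact ⟨fun _ => i, ((Nat.cast_pos.mpr hi).trans_le hdiag).ne', ⟨⟨0, by omega⟩, rfl⟩⟩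

lemma deg_pos_of_connected (hconn : HConnected n E) {e : Finset (Fin n)} (he : e ∈ E)
    {v : Fin n} (hv : v ∈ e) (i : Fin n) : 0 < deg n E i := by
  rw [deg, card_pos]
  rcases (hconn i v).cases_head with rfl | ⟨_, ⟨e', he', hie', -⟩, -⟩
  · exact ⟨e, mem_filter.mpr ⟨he, hv⟩⟩
  · exact ⟨e', mem_filter.mpr ⟨he', hie'⟩⟩

end Hypergraph

def circuitMeans {n : ℕ} (arc : Fin n → Fin n → Prop) (w : Fin n → ℝ) : Set ℝ :=
  {r | ∃ (p : ℕ) (γ : ℕ → Fin n), IsCircuit arc p γ ∧ r = (∏ j ∈ range p, w (γ j)) ^ ((p : ℝ)⁻¹)}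

section Circuits

variable {n : ℕ} {arc : Fin n → Fin n → Prop} {w : Fin n → ℝ}

lemma circuitMeans_nonneg (hw : ∀ i, 0 ≤ w i) : ∀ r ∈ circuitMeans arc w, 0 ≤ r := by
  rintro _ ⟨p, γ, -, rfl⟩
  exact Real.rpow_nonneg (prod_nonneg fun j _ => hw (γ j)) _

lemma circuitMeans_le (hw : ∀ i, 0 ≤ w i) {c : ℝ} (hc : ∀ i, w i ≤ c) :
    ∀ r ∈ circuitMeans arc w, r ≤ c := by
  rintro _ ⟨p, γ, ⟨hp, -, -⟩, rfl⟩
  have hprod : ∏ j ∈ range p, w (γ j) ≤ c ^ p := by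
    simpa using prod_le_prod (fun j _ => hw (γ j)) fun j (_ : j ∈ range p) => hc (γ j)
  calc (∏ j ∈ range p, w (γ j)) ^ ((p : ℝ)⁻¹) ≤ (c ^ p) ^ ((p : ℝ)⁻¹) :=
        Real.rpow_le_rpow (prod_nonneg fun j _ => hw (γ j)) hprod (by positivity)
    _ = c := Real.pow_rpow_inv_natCast ((hw (γ 0)).trans (hc _)) hp.ne'

lemma mem_circuitMeans_of_arc_self {i : Fin n} (h : arc i i) : w i ∈ circuitMeans arc w :=
  ⟨1, fun _ => i, ⟨one_pos, rfl, fun _ _ => h⟩, by simp⟩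

lemma sInf_circuitMeans_le (hw : ∀ i, 0 ≤ w i) {i : Fin n} (h : arc i i) :
    sInf (circuitMeans arc w) ≤ w i :=
  csInf_le ⟨0, circuitMeans_nonneg hw⟩ (mem_circuitMeans_of_arc_self h)

lemma le_sSup_circuitMeans (hw : ∀ i, 0 ≤ w i) {i : Fin n} (h : arc i i) (hi : ∀ j, w j ≤ w i) :
    w i ≤ sSup (circuitMeans arc w) :=
  le_csSup ⟨w i, circuitMeans_le hw hi⟩ (mem_circuitMeans_of_arc_self h)

end Circuits

theorem stmt11_general (k n : ℕ) (hk : 2 ≤ k)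
    (E : Finset (Finset (Fin n))) (hunif : ∀ e ∈ E, e.card = k)
    (hconn : HConnected n E) :
    sInf {r : ℝ | ∃ (p : ℕ) (γ : ℕ → Fin n), IsCircuit (tArc k n (qT k n E)) p γ ∧
        r = (∏ j ∈ Finset.range p, (2 * deg n E (γ j) : ℝ)) ^ ((p : ℝ)⁻¹)}
      ≤ specRad k n (qT k n E) ∧
    specRad k n (qT k n E) ≤
      sSup {r : ℝ | ∃ (p : ℕ) (γ : ℕ → Fin n), IsCircuit (tArc k n (qT k n E)) p γ ∧
        r = (∏ j ∈ Finset.range p, (2 * deg n E (γ j) : ℝ)) ^ ((p : ℝ)⁻¹)} := by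
  change sInf (circuitMeans (tArc k n (qT k n E)) fun i => 2 * (deg n E i : ℝ)) ≤ _ ∧
    _ ≤ sSup (circuitMeans (tArc k n (qT k n E)) fun i => 2 * (deg n E i : ℝ))
  have hw : ∀ i, 0 ≤ 2 * (deg n E i : ℝ) := fun i => by positivity
  have hslice : ∀ i, sliceSum k n (qT k n E) i = 2 * deg n E i := sliceSum_qT (by omega) hunif
  rcases E.eq_empty_or_nonempty with rfl | ⟨e, he⟩
  · have hdeg : ∀ i, 2 * (deg n ∅ i : ℝ) ≤ 0 := by simp [deg]
    have hρ : specRad k n (qT k n ∅) = 0 :=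
      (specRad_le qT_nonneg le_rfl fun i => (hslice i).trans_le (hdeg i)).antisymm specRad_nonneg
    exact ⟨(Real.sInf_nonpos (circuitMeans_le hw hdeg)).trans hρ.ge,
      hρ.le.trans (Real.sSup_nonneg (circuitMeans_nonneg hw))⟩
  · obtain ⟨v, hv⟩ := card_pos.mp (show 0 < #e by rw [hunif e he]; omega)
    have : Nonempty (Fin n) := ⟨v⟩
    have hloop : ∀ i, tArc k n (qT k n E) i i := fun i =>
      tArc_qT_self hk (deg_pos_of_connected hconn he hv i)
    obtain ⟨imin, himin⟩ := Finite.exists_min fun i => 2 * (deg n E i : ℝ)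
    obtain ⟨imax, himax⟩ := Finite.exists_max fun i => 2 * (deg n E i : ℝ)
    exact ⟨(sInf_circuitMeans_le hw (hloop imin)).trans
        (le_specRad hk qT_nonneg (hw imin) fun i => (himin i).trans (hslice i).ge),
      (specRad_le qT_nonneg (hw imax) fun i => (hslice i).trans_le (himax i)).trans
        (le_sSup_circuitMeans hw (hloop imax) himax)⟩

theorem stmt11 (k n : ℕ) (hk : 2 ≤ k) (hn : 0 < n)
    (E : Finset (Finset (Fin n))) (hunif : ∀ e ∈ E, e.card = k)
    (hconn : HConnected n E) :
    sInf {r : ℝ | ∃ (p : ℕ) (γ : ℕ → Fin n), IsCircuit (tArc k n (qT k n E)) p γ ∧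
        r = (∏ j ∈ Finset.range p, (2 * deg n E (γ j) : ℝ)) ^ ((p : ℝ)⁻¹)}
      ≤ specRad k n (qT k n E) ∧
    specRad k n (qT k n E) ≤
      sSup {r : ℝ | ∃ (p : ℕ) (γ : ℕ → Fin n), IsCircuit (tArc k n (qT k n E)) p γ ∧
        r = (∏ j ∈ Finset.range p, (2 * deg n E (γ j) : ℝ)) ^ ((p : ℝ)⁻¹)} :=
  stmt11_general k n hk E hunif hconn
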